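/- arXiv:2301.03186 — 2 statements merged into one kernel-verified Lean document; each statement's English description precedes it below -/
import Mathlib

section
/- Fix a real L > 1 and reals y_0, y_1 with log(1 − 1/L) < y_0 < y_1, and fix any y with log(1 − 1/L) < y < y_1. Let Y_1, …, Y_n be reals with y_0 ≤ Y_i ≤ y_1 for all i. Then Σ_{i=1}^n log(1 + L·(e^{Y_i} − 1)) ≤ n·(a_1·m_2 + b_1·m_1 + c_1), where a_1, b_1, c_1 are the quadratic coefficients determined by L, y and y_1. (This is the upper bound of Theorem 1; the infimum over such y of the right side is therefore also an upper bound.) -/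
/-! Write `F t = log (1 + L * (exp t - 1))` for `t > log (1 - 1 / L)`. Its derivative
`F' t = (1 - (1 - 1 / L) * exp (-t))⁻¹` is the reciprocal of a positive concave function, hence
convex. The quadratic `q t = a₁ t² + b₁ t + c₁` is the Hermite interpolant of `F` at the double
node `y` and the node `y₁`, so `g = q - F` vanishes at `y` and `y₁` and `g' y = 0`. By Rolle `g'`
has a second zero `ξ ∈ (y, y₁)`; being concave, `g'` is `≤ 0` left of `y`, `≥ 0` on `[y, ξ]` and
`≤ 0` right of `ξ`, so `g ≥ 0` on `(log (1 - 1 / L), y₁]`. Summing `F (Y i) ≤ q (Y i)` gives the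
bound. -/

open Real Set

section Calculus

variable {s : Set ℝ} {g g' : ℝ → ℝ}

theorem antitoneOn_of_hasDerivAt_nonpos (hs : Convex ℝ s) (hg : ∀ x ∈ s, HasDerivAt g (g' x) x)
    (hg' : ∀ x ∈ s, g' x ≤ 0) : AntitoneOn g s :=
  antitoneOn_of_hasDerivWithinAt_nonpos hs (fun x hx ↦ (hg x hx).continuousAt.continuousWithinAt)
    (fun x hx ↦ (hg x (interior_subset hx)).hasDerivWithinAt) fun x hx ↦ hg' x (interior_subset hx)

theorem monotoneOn_of_hasDerivAt_nonneg (hs : Convex ℝ s) (hg : ∀ x ∈ s, HasDerivAt g (g' x) x)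
    (hg' : ∀ x ∈ s, 0 ≤ g' x) : MonotoneOn g s :=
  monotoneOn_of_hasDerivWithinAt_nonneg hs (fun x hx ↦ (hg x hx).continuousAt.continuousWithinAt)
    (fun x hx ↦ (hg x (interior_subset hx)).hasDerivWithinAt) fun x hx ↦ hg' x (interior_subset hx)

theorem nonneg_of_concaveOn_deriv (hg : ∀ x ∈ s, HasDerivAt g (g' x) x) (hg' : ConcaveOn ℝ s g')
    {y z : ℝ} (hy : y ∈ s) (hz : z ∈ s) (hyz : y < z) (hgy : g y = 0) (hg'y : g' y = 0)
    (hgz : g z = 0) {t : ℝ} (ht : t ∈ s) (htz : t ≤ z) : 0 ≤ g t := by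
  have hs : Convex ℝ s := hg'.1
  have hIcc : Icc y z ⊆ s := hs.ordConnected.out hy hz
  obtain ⟨ξ, ⟨hyξ, hξz⟩, hg'ξ⟩ := exists_hasDerivAt_eq_zero hyz
    (fun x hx ↦ (hg x (hIcc hx)).continuousAt.continuousWithinAt) (hgy.trans hgz.symm)
    fun x hx ↦ hg x (hIcc (Ioo_subset_Icc_self hx))
  have hξ : ξ ∈ s := hIcc ⟨hyξ.le, hξz.le⟩
  rcases le_total t y with hty | hyt
  · have hanti : AntitoneOn g (s ∩ Iic y) :=
      antitoneOn_of_hasDerivAt_nonpos (hs.inter (convex_Iic y)) (fun x hx ↦ hg x hx.1)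
        fun x hx ↦ hg'y ▸ hg'.left_le_of_le_right'' hx.1 hξ hx.2 hyξ (by rw [hg'y, hg'ξ])
    exact hgy ▸ hanti ⟨ht, hty⟩ ⟨hy, mem_Iic.2 le_rfl⟩ hty
  rcases le_total t ξ with htξ | hξt
  · have hmono : MonotoneOn g (Icc y ξ) :=
      monotoneOn_of_hasDerivAt_nonneg (convex_Icc y ξ)
        (fun x hx ↦ hg x (hIcc ⟨hx.1, hx.2.trans hξz.le⟩)) fun x hx ↦ by
          simpa [hg'y, hg'ξ] using hg'.ge_on_segment hy hξ (segment_eq_Icc hyξ.le ▸ hx)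
    exact hgy ▸ hmono ⟨le_rfl, hyξ.le⟩ ⟨hyt, htξ⟩ hyt
  · have hanti : AntitoneOn g (s ∩ Ici ξ) :=
      antitoneOn_of_hasDerivAt_nonpos (hs.inter (convex_Ici ξ)) (fun x hx ↦ hg x hx.1)
        fun x hx ↦ hg'ξ ▸ hg'.right_le_of_le_left'' hy hx.1 hyξ hx.2 (by rw [hg'y, hg'ξ])
    exact hgz ▸ hanti ⟨ht, hξt⟩ ⟨hz, hξz.le⟩ htz

end Calculus

theorem ConcaveOn.convexOn_inv {E : Type*} [AddCommGroup E] [Module ℝ E] {s : Set E} {f : E → ℝ}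
    (hf : ConcaveOn ℝ s f) (hf₀ : ∀ x ∈ s, 0 < f x) : ConvexOn ℝ s fun x ↦ (f x)⁻¹ := by
  refine ⟨hf.1, fun x hx y hy a b ha hb hab ↦ ?_⟩
  have hcombo : 0 < a • f x + b • f y := convex_Ioi (0 : ℝ) (hf₀ x hx) (hf₀ y hy) ha hb hab
  calc (f (a • x + b • y))⁻¹ ≤ (a • f x + b • f y)⁻¹ := inv_anti₀ hcombo (hf.2 hx hy ha hb hab)
    _ ≤ a • (f x)⁻¹ + b • (f y)⁻¹ := by
      simpa only [zpow_neg_one] using (convexOn_zpow (𝕜 := ℝ) (-1)).2 (hf₀ x hx) (hf₀ y hy) ha hb hab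

theorem one_add_mul_exp_sub_one_pos {L t : ℝ} (hL : 1 < L) (ht : log (1 - 1 / L) < t) :
    0 < 1 + L * (exp t - 1) := by
  have hκ : 0 < 1 - 1 / L := sub_pos.2 ((div_lt_one (by linarith)).2 hL)
  have hLκ : L * (1 - 1 / L) = L - 1 := by field_simp
  linarith [mul_lt_mul_of_pos_left ((log_lt_iff_lt_exp hκ).1 ht) (by linarith : 0 < L)]

theorem hasDerivAt_log_one_add_mul_exp_sub_one {L t : ℝ} (ht : 1 + L * (exp t - 1) ≠ 0) :
    HasDerivAt (fun t ↦ log (1 + L * (exp t - 1))) (L * exp t / (1 + L * (exp t - 1))) t := by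
  have hD : HasDerivAt (fun t ↦ 1 + L * (exp t - 1)) (L * exp t) t := by
    simpa using (((hasDerivAt_exp t).sub_const 1).const_mul L).const_add 1
  exact hD.log ht

theorem convexOn_mul_exp_div_one_add_mul_exp_sub_one {L : ℝ} (hL : 1 < L) :
    ConvexOn ℝ (Ioi (log (1 - 1 / L))) fun t ↦ L * exp t / (1 + L * (exp t - 1)) := by
  have hκ : 0 ≤ 1 - 1 / L := sub_nonneg.2 (div_le_one_of_le₀ hL.le (by linarith))
  have hexp : ConvexOn ℝ (Ioi (log (1 - 1 / L))) fun t ↦ (1 - 1 / L) * exp (-t) :=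
    ((convexOn_exp.comp_linearMap (-LinearMap.id)).smul hκ).subset (subset_univ _) (convex_Ioi _)
  have hid (t : ℝ) : 1 - (1 - 1 / L) * exp (-t) = (1 + L * (exp t - 1)) / (L * exp t) := by
    rw [exp_neg]
    field_simp
    ring
  refine (((concaveOn_const 1 (convex_Ioi _)).sub hexp).convexOn_inv fun t ht ↦ ?_).congr
    fun t ht ↦ ?_
  · simp only [Pi.sub_apply, hid]
    exact div_pos (one_add_mul_exp_sub_one_pos hL ht) (by positivity)
  · simp only [Pi.sub_apply, hid, inv_div]

theorem log_one_add_mul_exp_sub_one_le_quadratic {L y y1 a b c t : ℝ} (hL : 1 < L)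
    (hy : log (1 - 1 / L) < y) (hyy1 : y < y1)
    (hqy : a * y ^ 2 + b * y + c = log (1 + L * (exp y - 1)))
    (hq'y : 2 * a * y + b = L * exp y / (1 + L * (exp y - 1)))
    (hqy1 : a * y1 ^ 2 + b * y1 + c = log (1 + L * (exp y1 - 1)))
    (ht : log (1 - 1 / L) < t) (hty1 : t ≤ y1) :
    log (1 + L * (exp t - 1)) ≤ a * t ^ 2 + b * t + c := by
  have hquadratic (x : ℝ) : HasDerivAt (fun t ↦ a * t ^ 2 + b * t + c) (2 * a * x + b) x :=
    ((((hasDerivAt_pow 2 x).const_mul a).add ((hasDerivAt_id x).const_mul b)).add_const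
      c).congr_deriv (by ring)
  have := nonneg_of_concaveOn_deriv (g := fun t ↦ a * t ^ 2 + b * t + c - log (1 + L * (exp t - 1)))
    (g' := fun t ↦ 2 * a * t + b - L * exp t / (1 + L * (exp t - 1)))
    (fun x hx ↦ (hquadratic x).sub
      (hasDerivAt_log_one_add_mul_exp_sub_one (one_add_mul_exp_sub_one_pos hL hx).ne'))
    ((((LinearMap.mul ℝ ℝ (2 * a)).concaveOn (convex_Ioi _)).add_const b).sub
      (convexOn_mul_exp_div_one_add_mul_exp_sub_one hL))
    hy (hy.trans hyy1) hyy1 (sub_eq_zero.2 hqy) (sub_eq_zero.2 hq'y) (sub_eq_zero.2 hqy1) ht hty1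
  exact sub_nonneg.1 this

theorem stmt_1_general (L y0 y1 y : ℝ) (hL : 1 < L)
    (h0 : Real.log (1 - 1 / L) < y0) (hy0 : Real.log (1 - 1 / L) < y) (hy1 : y < y1)
    (n : ℕ) (Y : Fin n → ℝ) (hY : ∀ i, y0 ≤ Y i ∧ Y i ≤ y1)
    (a b c m1 m2 : ℝ)
    (ha : a = (1 / (y - y1)) *
      (Real.log ((1 + L * (Real.exp y1 - 1)) / (1 + L * (Real.exp y - 1))) / (y - y1)
        + L * Real.exp y / (1 + L * (Real.exp y - 1))))
    (hb : b = L * Real.exp y / (1 + L * (Real.exp y - 1)) - 2 * a * y)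
    (hc : c = Real.log (1 + L * (Real.exp y1 - 1)) - a * y1 ^ 2 - b * y1)
    (hm1 : m1 = (1 / (n : ℝ)) * ∑ i, Y i)
    (hm2 : m2 = (1 / (n : ℝ)) * ∑ i, (Y i) ^ 2) :
    ∑ i, Real.log (1 + L * (Real.exp (Y i) - 1)) ≤ (n : ℝ) * (a * m2 + b * m1 + c) := by
  have hDy := one_add_mul_exp_sub_one_pos hL hy0
  have hDy1 := one_add_mul_exp_sub_one_pos hL (hy0.trans hy1)
  have hquad : a * (y - y1) ^ 2 = log (1 + L * (exp y1 - 1)) - log (1 + L * (exp y - 1))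
      + L * exp y / (1 + L * (exp y - 1)) * (y - y1) := by
    rw [ha, log_div hDy1.ne' hDy.ne']
    field_simp [sub_ne_zero.2 hy1.ne]
  have hbound (t : ℝ) (ht : y0 ≤ t ∧ t ≤ y1) :
      log (1 + L * (exp t - 1)) ≤ a * t ^ 2 + b * t + c :=
    log_one_add_mul_exp_sub_one_le_quadratic hL hy0 hy1
      (by rw [hc, hb]; linear_combination -hquad) (by rw [hb]; ring) (by rw [hc]; ring)
      (h0.trans_le ht.1) ht.2
  have hmoments : ∑ i, (a * Y i ^ 2 + b * Y i + c) = (n : ℝ) * (a * m2 + b * m1 + c) := by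
    obtain rfl | hn := n.eq_zero_or_pos
    · simp
    rw [hm1, hm2, Finset.sum_add_distrib, Finset.sum_add_distrib, ← Finset.mul_sum,
      ← Finset.mul_sum, Finset.sum_const, Finset.card_univ, Fintype.card_fin, nsmul_eq_mul]
    field_simp
  calc ∑ i, log (1 + L * (exp (Y i) - 1)) ≤ ∑ i, (a * Y i ^ 2 + b * Y i + c) :=
        Finset.sum_le_sum fun i _ ↦ hbound (Y i) (hY i)
    _ = (n : ℝ) * (a * m2 + b * m1 + c) := hmoments

theorem stmt_1 (L y0 y1 y : ℝ) (hL : 1 < L)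
    (h0 : Real.log (1 - 1 / L) < y0) (h01 : y0 < y1) (hy0 : Real.log (1 - 1 / L) < y) (hy1 : y < y1)
    (n : ℕ) (Y : Fin n → ℝ) (hY : ∀ i, y0 ≤ Y i ∧ Y i ≤ y1)
    (a b c m1 m2 : ℝ)
    (ha : a = (1 / (y - y1)) *
      (Real.log ((1 + L * (Real.exp y1 - 1)) / (1 + L * (Real.exp y - 1))) / (y - y1)
        + L * Real.exp y / (1 + L * (Real.exp y - 1))))
    (hb : b = L * Real.exp y / (1 + L * (Real.exp y - 1)) - 2 * a * y)
    (hc : c = Real.log (1 + L * (Real.exp y1 - 1)) - a * y1 ^ 2 - b * y1)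
    (hm1 : m1 = (1 / (n : ℝ)) * ∑ i, Y i)
    (hm2 : m2 = (1 / (n : ℝ)) * ∑ i, (Y i) ^ 2) :
    ∑ i, Real.log (1 + L * (Real.exp (Y i) - 1)) ≤ (n : ℝ) * (a * m2 + b * m1 + c) :=
  stmt_1_general L y0 y1 y hL h0 hy0 hy1 n Y hY a b c m1 m2 ha hb hc hm1 hm2
end

section
/- Fix a real L with 0 < L < 1 and reals y_0, y_1 with y_0 < y_1 < log(1/L − 1), and fix any y < y_1. Let Y_1, …, Y_n be reals with y_0 ≤ Y_i ≤ y_1 for all i. Then Σ_{i=1}^n log(1 + L·(e^{Y_i} − 1)) ≤ n·(a_1·m_2 + b_1·m_1 + c_1), where a_1, b_1, c_1 are the quadratic coefficients determined by L, y and y_1. (This is the upper bound of Theorem 2.) -/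
/-!
Write `F x = log (1 + L (eˣ - 1))` and `q x = a x² + b x + c`: the quadratic `q` is tangent to `F`
at `y` and meets it again at `y₁`. The derivative `F' x = σ (x - log (1 / L - 1))` is a shifted
logistic function, convex left of its inflection point, so `h = q - F` has a concave derivative on
`(-∞, y₁]`. By Rolle `h'` has a second zero `ξ ∈ (y, y₁)`, and concavity forces `h' ≤ 0` on
`(-∞, y]`, `h' ≥ 0` on `[y, ξ]` and `h' ≤ 0` on `[ξ, y₁]`. Hence `h ≥ 0` on `(-∞, y₁]`, since
`h y = h y₁ = 0`, and summing `F (Y i) ≤ q (Y i)` over the days gives the bound.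
-/

open Real Set Finset

theorem Real.convexOn_sigmoid_Iic : ConvexOn ℝ (Iic 0) sigmoid := by
  refine MonotoneOn.convexOn_of_deriv (convex_Iic 0) continuous_sigmoid.continuousOn
    differentiable_sigmoid.differentiableOn ?_
  rw [deriv_sigmoid, interior_Iic]
  intro x _ z hz hxz
  have hσ : sigmoid x ≤ sigmoid z := sigmoid_le hxz
  have hσz : sigmoid z ≤ 2⁻¹ := sigmoid_zero ▸ sigmoid_le hz.le
  dsimp only
  nlinarith

theorem image_le_of_hasDerivAt_nonpos {f f' : ℝ → ℝ} {a b : ℝ} (hab : a ≤ b)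
    (hf : ∀ x, HasDerivAt f (f' x) x) (hf' : ∀ x ∈ Ioo a b, f' x ≤ 0) : f b ≤ f a := by
  refine antitoneOn_of_hasDerivWithinAt_nonpos (convex_Icc a b)
    (fun x _ => (hf x).continuousAt.continuousWithinAt) (fun x _ => (hf x).hasDerivWithinAt) ?_
    (left_mem_Icc.2 hab) (right_mem_Icc.2 hab) hab
  rwa [interior_Icc]

theorem image_le_of_hasDerivAt_nonneg {f f' : ℝ → ℝ} {a b : ℝ} (hab : a ≤ b)
    (hf : ∀ x, HasDerivAt f (f' x) x) (hf' : ∀ x ∈ Ioo a b, 0 ≤ f' x) : f a ≤ f b := by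
  refine monotoneOn_of_hasDerivWithinAt_nonneg (convex_Icc a b)
    (fun x _ => (hf x).continuousAt.continuousWithinAt) (fun x _ => (hf x).hasDerivWithinAt) ?_
    (left_mem_Icc.2 hab) (right_mem_Icc.2 hab) hab
  rwa [interior_Icc]

theorem nonneg_of_concaveOn_deriv_s3 {h h' : ℝ → ℝ} {y y₁ x : ℝ}
    (hh : ∀ x, HasDerivAt h (h' x) x) (hconc : ConcaveOn ℝ (Iic y₁) h') (hy : y < y₁)
    (h_y : h y = 0) (h'_y : h' y = 0) (h_y₁ : h y₁ = 0) (hx : x ≤ y₁) : 0 ≤ h x := by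
  obtain ⟨ξ, ⟨hyξ, hξy₁⟩, h'_ξ⟩ := exists_hasDerivAt_eq_zero hy
    (fun x _ => (hh x).continuousAt.continuousWithinAt) (h_y.trans h_y₁.symm) fun x _ => hh x
  have mem : ∀ {t}, t ≤ y₁ → t ∈ Iic y₁ := id
  rcases le_total x y with hxy | hyx
  · refine h_y ▸ image_le_of_hasDerivAt_nonpos hxy hh fun t ht => ?_
    exact h'_y ▸ hconc.left_le_of_le_right'' (mem (ht.2.le.trans hy.le)) (mem hξy₁.le) ht.2.le
      hyξ (h'_ξ.trans h'_y.symm).ge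
  rcases le_total x ξ with hxξ | hξx
  · refine h_y ▸ image_le_of_hasDerivAt_nonneg hyx hh fun t ht => ?_
    have hmin := hconc.ge_on_segment (mem hy.le) (mem hξy₁.le)
      (by rw [segment_eq_Icc hyξ.le]; exact ⟨ht.1.le, ht.2.le.trans hxξ⟩)
    rwa [h'_y, h'_ξ, min_self] at hmin
  · refine h_y₁ ▸ image_le_of_hasDerivAt_nonpos hx hh fun t ht => ?_
    exact h'_ξ ▸ hconc.right_le_of_le_left'' (mem hy.le) (mem ht.2.le) hyξ
      (hξx.trans ht.1.le) (h'_ξ.trans h'_y.symm).le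

theorem le_quadratic_of_convexOn_deriv {F F' : ℝ → ℝ} {y y₁ a b c x : ℝ}
    (hF : ∀ x, HasDerivAt F (F' x) x) (hconv : ConvexOn ℝ (Iic y₁) F') (hy : y < y₁)
    (ha : a = 1 / (y - y₁) * ((F y₁ - F y) / (y - y₁) + F' y))
    (hb : b = F' y - 2 * a * y) (hc : c = F y₁ - a * y₁ ^ 2 - b * y₁) (hx : x ≤ y₁) :
    F x ≤ a * x ^ 2 + b * x + c := by
  have hlin : ConcaveOn ℝ (Iic y₁) fun x => 2 * a * x + b :=
    ⟨convex_Iic y₁, fun u _ v _ p q _ _ hpq => by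
      simp only [smul_eq_mul]
      exact le_of_eq (by linear_combination b * hpq)⟩
  have hquad : ∀ x, HasDerivAt (fun x => a * x ^ 2 + b * x + c) (2 * a * x + b) x := fun x =>
    ((((hasDerivAt_pow 2 x).const_mul a).add ((hasDerivAt_id x).const_mul b)).add_const c)
      |>.congr_deriv (by ring)
  have h_y : a * y ^ 2 + b * y + c - F y = 0 := by
    have hyy₁ : y - y₁ ≠ 0 := sub_ne_zero.2 hy.ne
    rw [hc, hb, ha]
    field_simp
    ring
  have h_nonneg := nonneg_of_concaveOn_deriv_s3 (h := fun x => a * x ^ 2 + b * x + c - F x)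
    (fun x => (hquad x).sub (hF x)) (hlin.sub hconv) hy h_y (by simp [hb]) (by simp [hc]) hx
  simpa [sub_nonneg] using h_nonneg

noncomputable def leveragedLogReturn (L x : ℝ) : ℝ := log (1 + L * (exp x - 1))

section Leverage

variable {L : ℝ}

theorem one_add_mul_exp_sub_one_pos_s3 (hL0 : 0 ≤ L) (hL1 : L ≤ 1) (x : ℝ) :
    0 < 1 + L * (exp x - 1) := by
  have hexp := exp_pos x
  nlinarith [mul_nonneg hL0 hexp.le, mul_nonneg (sub_nonneg.2 hL1) hexp.le]

theorem hasDerivAt_leveragedLogReturn (hL0 : 0 ≤ L) (hL1 : L ≤ 1) (x : ℝ) :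
    HasDerivAt (leveragedLogReturn L) (L * exp x / (1 + L * (exp x - 1))) x :=
  (((hasDerivAt_exp x).sub_const 1).const_mul L).const_add 1
    |>.log (one_add_mul_exp_sub_one_pos_s3 hL0 hL1 x).ne'

theorem mul_exp_div_one_add_mul_exp_sub_one_eq_sigmoid (hL0 : 0 < L) (hL1 : L < 1) (x : ℝ) :
    L * exp x / (1 + L * (exp x - 1)) = sigmoid (x - log (1 / L - 1)) := by
  have hL : 0 < 1 / L - 1 := by rw [sub_pos, lt_div_iff₀ hL0, one_mul]; exact hL1
  have hD : 1 + (1 / L - 1) / exp x = (1 + L * (exp x - 1)) / (L * exp x) := by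
    field_simp
    ring
  rw [sigmoid_def, neg_sub, exp_sub, exp_log hL, hD, inv_div]

theorem convexOn_deriv_leveragedLogReturn (hL0 : 0 < L) (hL1 : L < 1) :
    ConvexOn ℝ (Iic (log (1 / L - 1))) fun x => L * exp x / (1 + L * (exp x - 1)) := by
  have hσ := convexOn_sigmoid_Iic.translate_right (-log (1 / L - 1))
  have hs : (fun z => -log (1 / L - 1) + z) ⁻¹' Iic 0 = Iic (log (1 / L - 1)) := by
    ext x
    simp
  have hf : (sigmoid ∘ fun z => -log (1 / L - 1) + z) =
      fun x => L * exp x / (1 + L * (exp x - 1)) := by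
    ext x
    rw [Function.comp_apply, neg_add_eq_sub, mul_exp_div_one_add_mul_exp_sub_one_eq_sigmoid hL0 hL1]
  rwa [hs, hf] at hσ

end Leverage

theorem sum_quadratic_eq_mul_moments {n : ℕ} (Y : Fin n → ℝ) (a b c : ℝ) :
    ∑ i, (a * Y i ^ 2 + b * Y i + c) =
      (n : ℝ) * (a * ((1 / (n : ℝ)) * ∑ i, Y i ^ 2) + b * ((1 / (n : ℝ)) * ∑ i, Y i) + c) := by
  rcases eq_or_ne n 0 with rfl | hn
  · simp
  · rw [sum_add_distrib, sum_add_distrib, ← mul_sum, ← mul_sum, sum_const, card_univ,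
      Fintype.card_fin]
    field_simp
    ring

theorem stmt_3_general (L y0 y1 y : ℝ) (hL0 : 0 < L) (hL1 : L < 1)
    (h1 : y1 < Real.log (1 / L - 1)) (hy : y < y1)
    (n : ℕ) (Y : Fin n → ℝ) (hY : ∀ i, y0 ≤ Y i ∧ Y i ≤ y1)
    (a b c m1 m2 : ℝ)
    (ha : a = (1 / (y - y1)) *
      (Real.log ((1 + L * (Real.exp y1 - 1)) / (1 + L * (Real.exp y - 1))) / (y - y1)
        + L * Real.exp y / (1 + L * (Real.exp y - 1))))
    (hb : b = L * Real.exp y / (1 + L * (Real.exp y - 1)) - 2 * a * y)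
    (hc : c = Real.log (1 + L * (Real.exp y1 - 1)) - a * y1 ^ 2 - b * y1)
    (hm1 : m1 = (1 / (n : ℝ)) * ∑ i, Y i)
    (hm2 : m2 = (1 / (n : ℝ)) * ∑ i, (Y i) ^ 2) :
    ∑ i, Real.log (1 + L * (Real.exp (Y i) - 1)) ≤ (n : ℝ) * (a * m2 + b * m1 + c) := by
  rw [log_div (one_add_mul_exp_sub_one_pos_s3 hL0.le hL1.le y1).ne'
    (one_add_mul_exp_sub_one_pos_s3 hL0.le hL1.le y).ne'] at ha
  have hconv := (convexOn_deriv_leveragedLogReturn hL0 hL1).subset (Iic_subset_Iic.2 h1.le)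
    (convex_Iic y1)
  rw [hm1, hm2, ← sum_quadratic_eq_mul_moments]
  exact sum_le_sum fun i _ => le_quadratic_of_convexOn_deriv (F := leveragedLogReturn L)
    (hasDerivAt_leveragedLogReturn hL0.le hL1.le) hconv hy ha hb hc (hY i).2

theorem stmt_3 (L y0 y1 y : ℝ) (hL0 : 0 < L) (hL1 : L < 1)
    (h01 : y0 < y1) (h1 : y1 < Real.log (1 / L - 1)) (hy : y < y1)
    (n : ℕ) (Y : Fin n → ℝ) (hY : ∀ i, y0 ≤ Y i ∧ Y i ≤ y1)
    (a b c m1 m2 : ℝ)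
    (ha : a = (1 / (y - y1)) *
      (Real.log ((1 + L * (Real.exp y1 - 1)) / (1 + L * (Real.exp y - 1))) / (y - y1)
        + L * Real.exp y / (1 + L * (Real.exp y - 1))))
    (hb : b = L * Real.exp y / (1 + L * (Real.exp y - 1)) - 2 * a * y)
    (hc : c = Real.log (1 + L * (Real.exp y1 - 1)) - a * y1 ^ 2 - b * y1)
    (hm1 : m1 = (1 / (n : ℝ)) * ∑ i, Y i)
    (hm2 : m2 = (1 / (n : ℝ)) * ∑ i, (Y i) ^ 2) :
    ∑ i, Real.log (1 + L * (Real.exp (Y i) - 1)) ≤ (n : ℝ) * (a * m2 + b * m1 + c) :=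
  stmt_3_general L y0 y1 y hL0 hL1 h1 hy n Y hY a b c m1 m2 ha hb hc hm1 hm2
end
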